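/- The function (x,y) ↦ R(t,x,y) is bounded on ℝ² for each t > 0, the quantity m(t) := sup_{x,y ∈ ℝ} |R(t,x,y)| is bounded on (0,∞), and m(t) → 0 as t → 0⁺. -/

import Mathlib

noncomputable section
open MeasureTheory Real Filter

/-- The Mehler kernel `G(t,x,y)`, the integral kernel of `e^{-tH}` for the
harmonic oscillator `H = ½(-d²/dx² + x²)`. -/
def G (t x y : ℝ) : ℝ :=
  (2 * Real.pi * Real.sinh t) ^ (-(1 : ℝ) / 2) *
    Real.exp (-(((x ^ 2 + y ^ 2) * Real.cosh t - 2 * x * y) / (2 * Real.sinh t)))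

/-- The leading error kernel `R(t,x,y)`. -/
def R (t x y : ℝ) : ℝ :=
  G t x y * (t ^ 2 / 12) *
    (t * ((1 / 4) * (Real.exp t + Real.exp (-t)) / (Real.exp t - Real.exp (-t)) +
          ((Real.exp t + Real.exp (-t)) * x * y - (x ^ 2 + y ^ 2)) /
            (Real.exp t - Real.exp (-t)) ^ 2) +
      (1 / 16) * (1 + (4 * x * y - (Real.exp t + Real.exp (-t)) * (x ^ 2 + y ^ 2)) /
            (Real.exp t - Real.exp (-t))))

/-! With `s = sinh t`, `c = cosh t` and `E` the exponent of the Mehler kernel, the bracket in `R`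
equals `t c/(4s) + 1/16 + t(x² + y²)/4 - (1/8 + t c/(2s)) E`. As `2 s E = (c - 1)(x² + y²) + (x - y)²`,
`t c ≤ (1 + t) s` and `t s ≤ (t + 2)(c - 1)`, it is at most `(t + 2)(1 + E)` in absolute value, which
the Gaussian factor `e^{-E}` absorbs. Hence `|R| ≤ t²(t + 2)/(12 √(2π sinh t))`, a majorant that is
`O(t^{3/2})` as `t → 0` because `sinh t ≥ t`, and bounded because `sinh t` grows exponentially. -/

namespace Real

theorem mul_cosh_le_one_add_mul_sinh (t : ℝ) : t * cosh t ≤ (1 + t) * sinh t := by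
  have hpos := mul_nonneg (exp_pos (-t)).le (sub_nonneg.2 (add_one_le_exp (2 * t)))
  have hexp : exp (-t) * exp (2 * t) = exp t := by rw [← exp_add]; ring_nf
  rw [cosh_eq, sinh_eq]
  nlinarith

theorem mul_sinh_le_add_two_mul_cosh_sub_one {t : ℝ} (ht : 0 ≤ t) :
    t * sinh t ≤ (t + 2) * (cosh t - 1) := by
  obtain ⟨h, rfl⟩ : ∃ h, t = 2 * h := ⟨t / 2, by ring⟩
  have hh : 0 ≤ sinh h := sinh_nonneg_iff.2 (by linarith)
  have := mul_le_mul_of_nonneg_left (mul_cosh_le_one_add_mul_sinh h) hh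
  rw [sinh_two_mul, cosh_two_mul, cosh_sq]
  nlinarith

theorem one_add_mul_exp_neg_le_one (a : ℝ) : (1 + a) * exp (-a) ≤ 1 := by
  rw [exp_neg, ← div_eq_mul_inv, div_le_one (exp_pos a)]
  linarith [add_one_le_exp a]

end Real

def mehlerExponent (t x y : ℝ) : ℝ :=
  ((x ^ 2 + y ^ 2) * Real.cosh t - 2 * x * y) / (2 * Real.sinh t)

def Rfactor (t x y : ℝ) : ℝ :=
  t * ((1 / 4) * (Real.exp t + Real.exp (-t)) / (Real.exp t - Real.exp (-t)) +
        ((Real.exp t + Real.exp (-t)) * x * y - (x ^ 2 + y ^ 2)) /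
          (Real.exp t - Real.exp (-t)) ^ 2) +
    (1 / 16) * (1 + (4 * x * y - (Real.exp t + Real.exp (-t)) * (x ^ 2 + y ^ 2)) /
          (Real.exp t - Real.exp (-t)))

theorem R_eq (t x y : ℝ) : R t x y =
    (2 * π * sinh t) ^ (-(1 : ℝ) / 2) * exp (-mehlerExponent t x y) * (t ^ 2 / 12) *
      Rfactor t x y :=
  rfl

theorem Rfactor_eq {t : ℝ} (ht : 0 < t) (x y : ℝ) :
    Rfactor t x y = t * cosh t / sinh t / 4 + 1 / 16 + t * (x ^ 2 + y ^ 2) / 4 -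
      (1 / 8 + t * cosh t / sinh t / 2) * mehlerExponent t x y := by
  have hs : sinh t ≠ 0 := (sinh_pos_iff.2 ht).ne'
  have hsum : exp t + exp (-t) = 2 * cosh t := by rw [cosh_eq]; ring
  have hdiff : exp t - exp (-t) = 2 * sinh t := by rw [sinh_eq]; ring
  rw [Rfactor, mehlerExponent, hsum, hdiff]
  field_simp
  linear_combination 512 * t * (x ^ 2 + y ^ 2) * cosh_sq t

theorem mehlerExponent_mul {t : ℝ} (ht : 0 < t) (x y : ℝ) :
    2 * sinh t * mehlerExponent t x y = (cosh t - 1) * (x ^ 2 + y ^ 2) + (x - y) ^ 2 := by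
  rw [mehlerExponent]
  field_simp [(sinh_pos_iff.2 ht).ne']
  ring

theorem abs_Rfactor_le {t : ℝ} (ht : 0 < t) (x y : ℝ) :
    |Rfactor t x y| ≤ (t + 2) * (1 + mehlerExponent t x y) := by
  have hs : 0 < sinh t := sinh_pos_iff.2 ht
  have hc : 0 < cosh t - 1 := sub_pos.2 (one_lt_cosh.2 ht.ne')
  have hE := mehlerExponent_mul ht x y
  rw [Rfactor_eq ht]
  set E := mehlerExponent t x y
  set k := t * cosh t / sinh t
  set u := x ^ 2 + y ^ 2
  have hk0 : 0 ≤ k := by positivity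
  have hk : k ≤ 1 + t := (div_le_iff₀ hs).2 (mul_cosh_le_one_add_mul_sinh t)
  have hE0 : 0 ≤ E := by
    have : 0 ≤ 2 * sinh t * E := by rw [hE]; positivity
    exact nonneg_of_mul_nonneg_right this (by positivity)
  have hu : t * u ≤ 2 * (t + 2) * E := by
    refine le_of_mul_le_mul_left ?_ hc
    nlinarith [mul_sinh_le_add_two_mul_cosh_sub_one ht.le, sq_nonneg (x - y)]
  rw [abs_le]
  constructor <;> nlinarith [mul_le_mul_of_nonneg_right hk hE0]

def RBound (t : ℝ) : ℝ :=
  t ^ 2 * (t + 2) / (12 * √(2 * π * sinh t))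

theorem abs_R_le {t : ℝ} (ht : 0 < t) (x y : ℝ) : |R t x y| ≤ RBound t := by
  have hP : (2 * π * sinh t) ^ (-(1 : ℝ) / 2) = (√(2 * π * sinh t))⁻¹ := by
    rw [neg_div, rpow_neg (by positivity), sqrt_eq_rpow]
  have hdecay := mul_le_mul_of_nonneg_left (one_add_mul_exp_neg_le_one (mehlerExponent t x y))
    (by linarith : 0 ≤ t + 2)
  calc |R t x y| = (√(2 * π * sinh t))⁻¹ * (t ^ 2 / 12) *
        (|Rfactor t x y| * exp (-mehlerExponent t x y)) := by
        rw [R_eq, hP, abs_mul, abs_mul, abs_mul, abs_of_nonneg (by positivity),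
          abs_of_pos (exp_pos _), abs_of_nonneg (by positivity : 0 ≤ t ^ 2 / 12)]
        ring
    _ ≤ (√(2 * π * sinh t))⁻¹ * (t ^ 2 / 12) *
        ((t + 2) * (1 + mehlerExponent t x y) * exp (-mehlerExponent t x y)) := by
        gcongr
        exact abs_Rfactor_le ht x y
    _ ≤ (√(2 * π * sinh t))⁻¹ * (t ^ 2 / 12) * (t + 2) := by
        gcongr
        linarith
    _ = RBound t := by
        rw [RBound]
        field_simp

theorem iSup_abs_R_le {t : ℝ} (ht : 0 < t) : ⨆ p : ℝ × ℝ, |R t p.1 p.2| ≤ RBound t :=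
  Real.iSup_le (fun p => abs_R_le ht p.1 p.2) ((abs_nonneg _).trans (abs_R_le ht 0 0))

theorem RBound_le_sqrt_mul {t : ℝ} (ht : 0 < t) : RBound t ≤ √t * (t * (t + 2) / 12) := by
  have hts : t ≤ 2 * π * sinh t := by
    nlinarith [self_le_sinh_iff.2 ht.le, pi_gt_three]
  calc RBound t ≤ t ^ 2 * (t + 2) / (12 * √t) := by
        rw [RBound]
        gcongr
    _ = √t * (t * (t + 2) / 12) := by
        field_simp
        exact (sq_sqrt ht.le).symm

theorem RBound_le_of_one_le {t : ℝ} (ht : 1 ≤ t) : RBound t ≤ 12 := by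
  have hexp : exp t ≤ 2 * π * sinh t := by
    have h2 : 2 ≤ exp t := by linarith [add_one_le_exp t]
    have h1 : exp (-t) ≤ 1 := exp_le_one_iff.2 (by linarith)
    rw [sinh_eq]
    nlinarith [pi_gt_three]
  have hcube : t ^ 3 ≤ 48 * exp (t / 2) := by
    have := pow_div_factorial_le_exp (t / 2) (by linarith) 3
    norm_num [Nat.factorial] at this
    linarith
  have hhalf : exp (t / 2) ≤ √(2 * π * sinh t) := by
    rw [exp_half]
    exact sqrt_le_sqrt hexp
  rw [RBound, div_le_iff₀ (by positivity)]
  nlinarith [exp_pos (t / 2)]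

theorem RBound_le {t : ℝ} (ht : 0 < t) : RBound t ≤ 12 := by
  rcases le_or_gt t 1 with h | h
  · refine (RBound_le_sqrt_mul ht).trans ?_
    have : √t ≤ 1 := sqrt_le_one.2 h
    have : t * (t + 2) ≤ 3 := by nlinarith
    nlinarith [sqrt_nonneg t]
  · exact RBound_le_of_one_le h.le

/-- `R(t,·,·)` is bounded for each `t > 0`, `m(t) = sup_{x,y} |R(t,x,y)|` is
bounded on `(0,∞)`, and `m(t) → 0` as `t → 0⁺`. -/
theorem R_bounded_and_small_time :
    (∀ t : ℝ, 0 < t → ∃ C : ℝ, ∀ x y : ℝ, |R t x y| ≤ C) ∧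
    (∃ C : ℝ, ∀ t : ℝ, 0 < t → (⨆ p : ℝ × ℝ, |R t p.1 p.2|) ≤ C) ∧
    Tendsto (fun t : ℝ => ⨆ p : ℝ × ℝ, |R t p.1 p.2|) (nhdsWithin 0 (Set.Ioi 0)) (nhds 0) := by
  refine ⟨fun t ht => ⟨RBound t, abs_R_le ht⟩,
    ⟨12, fun t ht => (iSup_abs_R_le ht).trans (RBound_le ht)⟩, ?_⟩
  have hmajorant : Tendsto (fun t : ℝ => √t * (t * (t + 2) / 12)) (nhdsWithin 0 (Set.Ioi 0))
      (nhds 0) := by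
    have hcont : Continuous fun t : ℝ => √t * (t * (t + 2) / 12) := by fun_prop
    simpa using (hcont.tendsto 0).mono_left nhdsWithin_le_nhds
  refine tendsto_of_tendsto_of_tendsto_of_le_of_le' tendsto_const_nhds hmajorant
    (Eventually.of_forall fun t => Real.iSup_nonneg fun p => abs_nonneg _) ?_
  filter_upwards [self_mem_nhdsWithin] with t ht
  exact (iSup_abs_R_le ht).trans (RBound_le_sqrt_mul ht)
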